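/- Let G = SN(n,𝒜) be a SetNim game with P-position set P, let I be a finite set of zero-one vectors each invariant for P, and suppose that for every position p there exist non-negative coefficients (c_z)_{z∈I} such that p̃ = p − Σ c_z·z is non-negative and the set of indices of non-zero entries of p̃ is contained in some A ∈ 𝒜. Then P equals exactly the set of non-negative integer linear combinations of the vectors in I. -/

import Mathlib

/-!
Subtracting a non-negative combination `w` of invariant vectors, one vector at a time, does not
change whether a position is a P-position. Reduce `p` in this way to `p - w` supported in a single
move set: that is a P-position only if it is `0`, since otherwise one move empties it, so
`p ∈ P` forces `p = w`. Conversely `w - w = 0 ∈ P`, hence `w ∈ P`.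
-/

/-- A legal move in SetNim: at least one stack strictly decreases, all changed
stacks lie in some allowed move set, stacks weakly decrease. -/
def Move {V : Type} (A : Set (Set V)) (p q : V → ℕ) : Prop :=
  q ≠ p ∧ (∀ i, q i ≤ p i) ∧ ∃ a ∈ A, ∀ i, q i ≠ p i → i ∈ a

/-- P-positions: positions all of whose options are N-positions. -/
def PPos {V : Type} [Fintype V] (A : Set (Set V)) (p : V → ℕ) : Prop :=
  ∀ q, Move A p q → ¬ PPos A q
termination_by Finset.univ.sum p
decreasing_by
  rename_i hq
  obtain ⟨hne, hle, -⟩ := hq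
  refine Finset.sum_lt_sum (fun i _ => hle i) ?_
  obtain ⟨i, hi⟩ := Function.ne_iff.mp hne
  exact ⟨i, Finset.mem_univ i, lt_of_le_of_ne (hle i) hi⟩

/-- A zero-one vector z is invariant for a set S of positions if adding any
integer multiple of z that keeps all entries non-negative preserves
membership in S. -/
def InvariantVec {n : ℕ} (S : Set (Fin n → ℕ)) (z : Fin n → ℕ) : Prop :=
  ∀ p : Fin n → ℕ, ∀ c : ℤ, (∀ i, 0 ≤ (p i : ℤ) + c * (z i : ℤ)) →
    (p ∈ S ↔ (fun i => ((p i : ℤ) + c * (z i : ℤ)).toNat) ∈ S)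

theorem ppos_zero {V : Type} [Fintype V] (A : Set (Set V)) : PPos A 0 := by
  rw [PPos]
  rintro q ⟨hne, hle, -⟩ -
  exact hne (funext fun i => Nat.le_zero.mp (hle i))

theorem eq_zero_of_ppos_of_support_subset {V : Type} [Fintype V] {A : Set (Set V)}
    {p : V → ℕ} (hp : PPos A p) {a : Set V} (ha : a ∈ A) (hsupp : ∀ i, p i ≠ 0 → i ∈ a) :
    p = 0 := by
  by_contra hne
  rw [PPos] at hp
  exact hp 0 ⟨Ne.symm hne, fun i => Nat.zero_le _, a, ha, fun i hi => hsupp i (Ne.symm hi)⟩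
    (ppos_zero A)

namespace InvariantVec

variable {n : ℕ} {S : Set (Fin n → ℕ)}

theorem mem_iff_sub_nsmul {z : Fin n → ℕ} (hz : InvariantVec S z) {p : Fin n → ℕ} (m : ℕ)
    (hle : m • z ≤ p) : p ∈ S ↔ p - m • z ∈ S := by
  have hle' (i : Fin n) : m * z i ≤ p i := hle i
  convert hz p (-m) fun i => by have := hle' i; linarith using 2
  funext i
  have := hle' i
  simp only [Pi.sub_apply, Pi.smul_apply, smul_eq_mul]
  rw [neg_mul, ← sub_eq_add_neg, ← Nat.cast_mul, ← Nat.cast_sub this, Int.toNat_natCast]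

theorem mem_iff_sub_sum {ι : Type*} {z : ι → Fin n → ℕ} (hz : ∀ j, InvariantVec S (z j))
    (c : ι → ℕ) (s : Finset ι) {p : Fin n → ℕ} (hle : ∑ j ∈ s, c j • z j ≤ p) :
    p ∈ S ↔ p - ∑ j ∈ s, c j • z j ∈ S := by
  classical
  induction s using Finset.induction_on with
  | empty => simp
  | insert a s ha ih =>
    rw [Finset.sum_insert ha, add_comm] at hle ⊢
    rw [tsub_add_eq_tsub_tsub, ih (le_of_add_le_left hle)]
    exact (hz a).mem_iff_sub_nsmul _ (le_tsub_of_add_le_left hle)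

end InvariantVec

theorem ppos_eq_cone_of_invariants {n k : ℕ} (A : Set (Set (Fin n)))
    (z : Fin k → (Fin n → ℕ))
    (hinv : ∀ j, InvariantVec {p | PPos A p} (z j))
    (hred : ∀ p : Fin n → ℕ, ∃ c : Fin k → ℕ,
      (∀ i, ∑ j, c j * z j i ≤ p i) ∧
      ∃ a ∈ A, ∀ i, p i - ∑ j, c j * z j i ≠ 0 → i ∈ a) :
    ∀ p : Fin n → ℕ,
      PPos A p ↔ ∃ c : Fin k → ℕ, p = fun i => ∑ j, c j * z j i := by
  have sum_apply (c : Fin k → ℕ) (i : Fin n) : (∑ j, c j • z j) i = ∑ j, c j * z j i := by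
    simp [Finset.sum_apply]
  have ppos_iff_sub (c : Fin k → ℕ) {p : Fin n → ℕ} (hle : ∑ j, c j • z j ≤ p) :
      PPos A p ↔ PPos A (p - ∑ j, c j • z j) :=
    InvariantVec.mem_iff_sub_sum hinv c Finset.univ hle
  intro p
  constructor
  · intro hp
    obtain ⟨c, hle, a, ha, hsupp⟩ := hred p
    simp only [← sum_apply] at hle hsupp
    have hreduced : p - ∑ j, c j • z j = 0 :=
      eq_zero_of_ppos_of_support_subset ((ppos_iff_sub c hle).1 hp) ha hsupp
    refine ⟨c, funext fun i => ?_⟩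
    rw [← sum_apply]
    exact congrFun (le_antisymm (tsub_eq_zero_iff_le.1 hreduced) hle) i
  · rintro ⟨c, rfl⟩
    have hcombo : (fun i => ∑ j, c j * z j i) = ∑ j, c j • z j :=
      funext fun i => (sum_apply c i).symm
    rw [hcombo, ppos_iff_sub c le_rfl, tsub_self]
    exact ppos_zero A
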